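/- arXiv:2210.09200 — 3 statements merged into one kernel-verified Lean document; each statement's English description precedes it below -/
import Mathlib

section
/- Under the hypotheses of the previous derivative identity, assume additionally that b > 0, L ≥ 0, and |G_i(t)| ≤ b L |ξ_i¹(t)| for all t. Then along the solutions, v̇_i ≤ −Σ_{j=1}^{N} θ_{ij}( (ξ_i¹ − ξ_j¹)ξ_i¹ + (ξ_i² − ξ_j²)ξ_i² + (1/b)(ξ_i³ − ξ_j³)ξ_i³ ) − (3ε − L/2)(ξ_i¹)² + a(ξ_i²)² − (c/b − L/2)(ξ_i³)², i.e., v̇_i ≤ −Σ_j θ_{ij}(…) − ξ_iᵀ Q ξ_i where Q = diag(3ε − L/2, −a, c/b − L/2). -/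
/-- Under the bound `|G_i| ≤ bL|ξ_i¹|` (with `b > 0`, `L ≥ 0`), the derivative of the
Lyapunov candidate `v_i = ½((ξ_i¹)² + (ξ_i²)² + (1/b)(ξ_i³)²)` along the multilevel
error system satisfies
`v̇_i ≤ −Σ_j θ_{ij}(…) − (3ε − L/2)(ξ_i¹)² + a(ξ_i²)² − (c/b − L/2)(ξ_i³)²`,
i.e. `v̇_i ≤ −Σ_j θ_{ij}(…) − ξ_iᵀQξ_i` with `Q = diag(3ε − L/2, −a, c/b − L/2)`. -/
theorem multilevel_lyapunov_derivative_bound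
    (a b c ε L : ℝ) (hb : 0 < b) (hL : 0 ≤ L) (N : ℕ)
    (θ : Fin N → Fin N → ℝ)
    (ξ1 ξ2 ξ3 G : Fin N → ℝ → ℝ)
    (h1 : ∀ i t, HasDerivAt (ξ1 i)
      (-(ξ2 i t) - ξ3 i t - (∑ j, θ i j * (ξ1 i t - ξ1 j t)) - 3 * ε * ξ1 i t) t)
    (h2 : ∀ i t, HasDerivAt (ξ2 i)
      (ξ1 i t + a * ξ2 i t - ∑ j, θ i j * (ξ2 i t - ξ2 j t)) t)
    (h3 : ∀ i t, HasDerivAt (ξ3 i)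
      (b * ξ1 i t - c * ξ3 i t - (∑ j, θ i j * (ξ3 i t - ξ3 j t)) + G i t) t)
    (hG : ∀ i t, |G i t| ≤ b * L * |ξ1 i t|) :
    ∀ i t,
      deriv (fun s => (1 / 2) * ((ξ1 i s) ^ 2 + (ξ2 i s) ^ 2 + (1 / b) * (ξ3 i s) ^ 2)) t ≤
        -(∑ j, θ i j * ((ξ1 i t - ξ1 j t) * ξ1 i t + (ξ2 i t - ξ2 j t) * ξ2 i t
            + (1 / b) * (ξ3 i t - ξ3 j t) * ξ3 i t))
          - (3 * ε - L / 2) * (ξ1 i t) ^ 2 + a * (ξ2 i t) ^ 2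
          - (c / b - L / 2) * (ξ3 i t) ^ 2 := by
  intro i t
  have hd : HasDerivAt (fun s => (1 / 2) * ((ξ1 i s) ^ 2 + (ξ2 i s) ^ 2 + (1 / b) * (ξ3 i s) ^ 2))
      ((1 / 2) * ((2 * ξ1 i t * (-(ξ2 i t) - ξ3 i t - (∑ j, θ i j * (ξ1 i t - ξ1 j t)) - 3 * ε * ξ1 i t))
        + (2 * ξ2 i t * (ξ1 i t + a * ξ2 i t - ∑ j, θ i j * (ξ2 i t - ξ2 j t)))
        + (1 / b) * (2 * ξ3 i t * (b * ξ1 i t - c * ξ3 i t - (∑ j, θ i j * (ξ3 i t - ξ3 j t)) + G i t)))) t := by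
    have d1 := (h1 i t).fun_pow 2
    have d2 := (h2 i t).fun_pow 2
    have d3 := ((h3 i t).fun_pow 2).const_mul (1 / b)
    have := ((d1.add d2).add d3).const_mul (1 / 2 : ℝ)
    refine this.congr_deriv ?_
    ring
  rw [hd.deriv]
  set X := ξ1 i t with hX
  set Y := ξ2 i t with hY
  set Z := ξ3 i t with hZ
  set S1 := ∑ j, θ i j * (ξ1 i t - ξ1 j t) with hS1
  set S2 := ∑ j, θ i j * (ξ2 i t - ξ2 j t) with hS2
  set S3 := ∑ j, θ i j * (ξ3 i t - ξ3 j t) with hS3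
  have hsum : ∑ j, θ i j * ((ξ1 i t - ξ1 j t) * ξ1 i t + (ξ2 i t - ξ2 j t) * ξ2 i t
      + (1 / b) * (ξ3 i t - ξ3 j t) * ξ3 i t)
      = S1 * X + S2 * Y + (1 / b) * S3 * Z := by
    simp only [hS1, hS2, hS3, Finset.sum_mul, Finset.mul_sum, ← Finset.sum_add_distrib]
    apply Finset.sum_congr rfl
    intro j _
    ring
  rw [hsum]
  have key : (1 / b) * (Z * G i t) ≤ (L / 2) * (X ^ 2 + Z ^ 2) := by
    have hs1 : (1 / b) * (Z * G i t) ≤ (1 / b) * |Z * G i t| :=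
      mul_le_mul_of_nonneg_left (le_abs_self _) (by positivity)
    have hs2 : (1 / b) * |Z * G i t| ≤ L * (|X| * |Z|) := by
      rw [abs_mul]
      have h := mul_le_mul_of_nonneg_left (hG i t) (abs_nonneg Z)
      calc (1 / b) * (|Z| * |G i t|) ≤ (1 / b) * (|Z| * (b * L * |X|)) :=
            mul_le_mul_of_nonneg_left h (by positivity)
        _ = L * (|X| * |Z|) := by field_simp
    have hs3 : L * (|X| * |Z|) ≤ (L / 2) * (X ^ 2 + Z ^ 2) := by
      have hsq : |X| * |Z| ≤ (|X| ^ 2 + |Z| ^ 2) / 2 := by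
        nlinarith [sq_nonneg (|X| - |Z|)]
      calc L * (|X| * |Z|) ≤ L * ((|X| ^ 2 + |Z| ^ 2) / 2) :=
            mul_le_mul_of_nonneg_left hsq hL
        _ = (L / 2) * (X ^ 2 + Z ^ 2) := by rw [sq_abs, sq_abs]; ring
    linarith
  have heq : (1 / 2) * ((2 * X * (-Y - Z - S1 - 3 * ε * X))
        + (2 * Y * (X + a * Y - S2))
        + (1 / b) * (2 * Z * (b * X - c * Z - S3 + G i t)))
      = -(S1 * X + S2 * Y + (1 / b) * S3 * Z)
        - 3 * ε * X ^ 2 + a * Y ^ 2 - (c / b) * Z ^ 2 + (1 / b) * (Z * G i t) := by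
    field_simp
    ring
  rw [heq]
  nlinarith [key]
end

section
/- Under the hypotheses of the previous bound, assume in addition that the layers are internally synchronized, i.e., ξ_iᵏ(t) = ξ_jᵏ(t) for all i, j = 1,…,N, all k = 1,2,3, and all t. Let λ_min = min(3ε − L/2, −a, c/b − L/2). Then along the solutions, v̇_i(t) ≤ −λ_min ‖ξ_i(t)‖² for all t, where ‖·‖ is the Euclidean norm on ℝ³. -/
/-- If in addition the layers are internally synchronized (`ξ_iᵏ = ξ_jᵏ` for all nodes
`i, j` and all `t`), then with `λ_min = min(3ε − L/2, −a, c/b − L/2)` the Lyapunov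
derivative satisfies `v̇_i(t) ≤ −λ_min‖ξ_i(t)‖²`, where `‖ξ_i‖²` is the squared
Euclidean norm `(ξ_i¹)² + (ξ_i²)² + (ξ_i³)²`. -/
theorem multilevel_lyapunov_bound_synchronized
    (a b c ε L : ℝ) (hb : 0 < b) (hL : 0 ≤ L) (N : ℕ)
    (θ : Fin N → Fin N → ℝ)
    (ξ1 ξ2 ξ3 G : Fin N → ℝ → ℝ)
    (h1 : ∀ i t, HasDerivAt (ξ1 i)
      (-(ξ2 i t) - ξ3 i t - (∑ j, θ i j * (ξ1 i t - ξ1 j t)) - 3 * ε * ξ1 i t) t)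
    (h2 : ∀ i t, HasDerivAt (ξ2 i)
      (ξ1 i t + a * ξ2 i t - ∑ j, θ i j * (ξ2 i t - ξ2 j t)) t)
    (h3 : ∀ i t, HasDerivAt (ξ3 i)
      (b * ξ1 i t - c * ξ3 i t - (∑ j, θ i j * (ξ3 i t - ξ3 j t)) + G i t) t)
    (hG : ∀ i t, |G i t| ≤ b * L * |ξ1 i t|)
    (hsync : ∀ i j : Fin N, ∀ t : ℝ,
      ξ1 i t = ξ1 j t ∧ ξ2 i t = ξ2 j t ∧ ξ3 i t = ξ3 j t) :
    ∀ i t,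
      deriv (fun s => (1 / 2) * ((ξ1 i s) ^ 2 + (ξ2 i s) ^ 2 + (1 / b) * (ξ3 i s) ^ 2)) t ≤
        -(min (3 * ε - L / 2) (min (-a) (c / b - L / 2))) *
          ((ξ1 i t) ^ 2 + (ξ2 i t) ^ 2 + (ξ3 i t) ^ 2) := by
  intro i t
  -- coupling sums vanish by synchronization
  have hs1 : (∑ j, θ i j * (ξ1 i t - ξ1 j t)) = 0 :=
    Finset.sum_eq_zero fun j _ => by rw [(hsync i j t).1]; ring
  have hs2 : (∑ j, θ i j * (ξ2 i t - ξ2 j t)) = 0 :=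
    Finset.sum_eq_zero fun j _ => by rw [(hsync i j t).2.1]; ring
  have hs3 : (∑ j, θ i j * (ξ3 i t - ξ3 j t)) = 0 :=
    Finset.sum_eq_zero fun j _ => by rw [(hsync i j t).2.2]; ring
  set x := ξ1 i t
  set y := ξ2 i t
  set z := ξ3 i t
  set g := G i t
  have H1 : HasDerivAt (ξ1 i) (-y - z - 3 * ε * x) t := by
    have := h1 i t; rw [hs1] at this; simpa using this
  have H2 : HasDerivAt (ξ2 i) (x + a * y) t := by
    have := h2 i t; rw [hs2] at this; simpa using this
  have H3 : HasDerivAt (ξ3 i) (b * x - c * z + g) t := by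
    have := h3 i t; rw [hs3] at this; simpa using this
  have HV : HasDerivAt
      (fun s => (1 / 2 : ℝ) * ((ξ1 i s) ^ 2 + (ξ2 i s) ^ 2 + (1 / b) * (ξ3 i s) ^ 2))
      ((1 / 2) * ((2 * x * (-y - z - 3 * ε * x)) + (2 * y * (x + a * y)) +
        (1 / b) * (2 * z * (b * x - c * z + g)))) t := by
    have p1 := H1.pow 2
    have p2 := H2.pow 2
    have p3 := (H3.pow 2).const_mul (1 / b : ℝ)
    have := ((p1.add p2).add p3).const_mul (1 / 2 : ℝ)
    refine this.congr_deriv ?_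
    push_cast
    ring
  rw [HV.deriv]
  -- now a pure inequality
  have hbne : (b : ℝ) ≠ 0 := ne_of_gt hb
  have hzg : z * g ≤ b * L * (|x| * |z|) := by
    calc z * g ≤ |z * g| := le_abs_self _
      _ = |z| * |g| := abs_mul _ _
      _ ≤ |z| * (b * L * |x|) := by
          apply mul_le_mul_of_nonneg_left (hG i t) (abs_nonneg _)
      _ = b * L * (|x| * |z|) := by ring
  have hxz : |x| * |z| ≤ (x ^ 2 + z ^ 2) / 2 := by
    nlinarith [sq_nonneg (|x| - |z|), sq_abs x, sq_abs z]
  have key : (1 / b) * (z * g) ≤ L / 2 * (x ^ 2 + z ^ 2) := by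
    rw [div_mul_eq_mul_div, div_le_iff₀ hb, one_mul]
    calc z * g ≤ b * L * (|x| * |z|) := hzg
      _ ≤ b * L * ((x ^ 2 + z ^ 2) / 2) := by
          apply mul_le_mul_of_nonneg_left hxz (by positivity)
      _ = L / 2 * (x ^ 2 + z ^ 2) * b := by ring
  have hm1 : min (3 * ε - L / 2) (min (-a) (c / b - L / 2)) ≤ 3 * ε - L / 2 :=
    min_le_left _ _
  have hm2 : min (3 * ε - L / 2) (min (-a) (c / b - L / 2)) ≤ -a :=
    le_trans (min_le_right _ _) (min_le_left _ _)
  have hm3 : min (3 * ε - L / 2) (min (-a) (c / b - L / 2)) ≤ c / b - L / 2 :=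
    le_trans (min_le_right _ _) (min_le_right _ _)
  have hz2 : (1 / b) * (2 * z * (b * x - c * z + g)) =
      2 * z * x - 2 * (c / b) * z ^ 2 + 2 * ((1 / b) * (z * g)) := by
    field_simp
  rw [hz2]
  nlinarith [sq_nonneg x, sq_nonneg y, sq_nonneg z, key, hm1, hm2, hm3,
    mul_le_mul_of_nonneg_right hm1 (sq_nonneg x),
    mul_le_mul_of_nonneg_right hm2 (sq_nonneg y),
    mul_le_mul_of_nonneg_right hm3 (sq_nonneg z)]
end

section
/- Let a, b, c, ε, L ∈ ℝ with b > 0 and L ≥ 0, and suppose λ_min := min(3ε − L/2, −a, c/b − L/2) > 0. Let ξ : [0, ∞) → ℝ³ be a differentiable function satisfying ξ̇¹ = −ξ² − ξ³ − 3ε ξ¹, ξ̇² = ξ¹ + a ξ², ξ̇³ = b ξ¹ − c ξ³ + G, where G : [0, ∞) → ℝ satisfies |G(t)| ≤ b L |ξ¹(t)| for all t, and suppose t ↦ ‖ξ(t)‖² is uniformly continuous on [0, ∞). Then ξ(t) → 0 as t → ∞. -/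
open Filter

/-- Appendix stability theorem: if `λ_min = min(3ε − L/2, −a, c/b − L/2) > 0` (with
`b > 0`, `L ≥ 0`), `ξ : [0,∞) → ℝ³` solves
`ξ̇¹ = −ξ² − ξ³ − 3εξ¹`, `ξ̇² = ξ¹ + aξ²`, `ξ̇³ = bξ¹ − cξ³ + G` with
`|G(t)| ≤ bL|ξ¹(t)|`, and `t ↦ ‖ξ(t)‖²` is uniformly continuous on `[0,∞)`, then
`ξ(t) → 0` as `t → ∞`. -/
theorem multilevel_synchronization_stability
    (a b c ε L : ℝ) (hb : 0 < b) (hL : 0 ≤ L)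
    (hQ : 0 < min (3 * ε - L / 2) (min (-a) (c / b - L / 2)))
    (ξ1 ξ2 ξ3 G : ℝ → ℝ)
    (h1 : ∀ t, 0 ≤ t → HasDerivAt ξ1 (-(ξ2 t) - ξ3 t - 3 * ε * ξ1 t) t)
    (h2 : ∀ t, 0 ≤ t → HasDerivAt ξ2 (ξ1 t + a * ξ2 t) t)
    (h3 : ∀ t, 0 ≤ t → HasDerivAt ξ3 (b * ξ1 t - c * ξ3 t + G t) t)
    (hG : ∀ t, 0 ≤ t → |G t| ≤ b * L * |ξ1 t|)
    (huc : UniformContinuousOn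
      (fun t => (ξ1 t) ^ 2 + (ξ2 t) ^ 2 + (ξ3 t) ^ 2) (Set.Ici (0:ℝ))) :
    Tendsto ξ1 atTop (nhds 0) ∧ Tendsto ξ2 atTop (nhds 0) ∧
      Tendsto ξ3 atTop (nhds 0) := by
  set lam := min (3 * ε - L / 2) (min (-a) (c / b - L / 2)) with hlamdef
  have hlam : 0 < lam := hQ
  have hl1 : lam ≤ 3 * ε - L / 2 := min_le_left _ _
  have hl2 : lam ≤ -a := le_trans (min_le_right _ _) (min_le_left _ _)
  have hl3 : lam ≤ c / b - L / 2 := le_trans (min_le_right _ _) (min_le_right _ _)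
  clear_value lam
  set f : ℝ → ℝ := fun t => (ξ1 t) ^ 2 + (ξ2 t) ^ 2 + (ξ3 t) ^ 2 with hfdef
  clear_value f
  have hf0 : ∀ t, 0 ≤ f t := fun t => by rw [hfdef]; positivity
  set v : ℝ → ℝ := fun t => ((ξ1 t) ^ 2 + (ξ2 t) ^ 2 + (ξ3 t) ^ 2 / b) / 2 with hvdef
  clear_value v
  have hv0 : ∀ t, 0 ≤ v t := fun t => by
    have h1 : 0 ≤ (ξ3 t) ^ 2 / b := div_nonneg (sq_nonneg _) hb.le
    have h2 : 0 ≤ (ξ1 t) ^ 2 := sq_nonneg _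
    have h3 : 0 ≤ (ξ2 t) ^ 2 := sq_nonneg _
    simp only [hvdef]
    linarith
  -- derivative of v
  have hder : ∀ t, 0 ≤ t → HasDerivAt v
      (ξ1 t * (-(ξ2 t) - ξ3 t - 3 * ε * ξ1 t) + ξ2 t * (ξ1 t + a * ξ2 t)
        + ξ3 t * (b * ξ1 t - c * ξ3 t + G t) / b) t := by
    intro t ht
    rw [hvdef]
    have d1 := (h1 t ht).pow 2
    have d2 := (h2 t ht).pow 2
    have d3 := ((h3 t ht).pow 2).div_const b
    have hd := ((d1.add d2).add d3).div_const 2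
    refine HasDerivAt.congr_deriv hd ?_
    push_cast
    ring
  have hvdiff : ∀ t, 0 ≤ t → DifferentiableAt ℝ v t :=
    fun t ht => (hder t ht).differentiableAt
  -- derivative bound
  have hbnd : ∀ t, 0 ≤ t →
      ξ1 t * (-(ξ2 t) - ξ3 t - 3 * ε * ξ1 t) + ξ2 t * (ξ1 t + a * ξ2 t)
        + ξ3 t * (b * ξ1 t - c * ξ3 t + G t) / b ≤ -lam * f t := by
    intro t ht
    have hG' := hG t ht
    have h3G : ξ3 t * G t ≤ b * L * (|ξ1 t| * |ξ3 t|) := by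
      calc ξ3 t * G t ≤ |ξ3 t * G t| := le_abs_self _
        _ = |ξ3 t| * |G t| := by rw [abs_mul]
        _ ≤ |ξ3 t| * (b * L * |ξ1 t|) :=
            mul_le_mul_of_nonneg_left hG' (abs_nonneg _)
        _ = b * L * (|ξ1 t| * |ξ3 t|) := by ring
    have hcross : |ξ1 t| * |ξ3 t| ≤ ((ξ1 t) ^ 2 + (ξ3 t) ^ 2) / 2 := by
      nlinarith [sq_nonneg (|ξ1 t| - |ξ3 t|), sq_abs (ξ1 t), sq_abs (ξ3 t)]
    have h3G2 : ξ3 t * G t ≤ b * (L * ((ξ1 t) ^ 2 + (ξ3 t) ^ 2) / 2) := by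
      have hbL : 0 ≤ b * L := mul_nonneg hb.le hL
      nlinarith [mul_le_mul_of_nonneg_left hcross hbL]
    have hsplit : ξ3 t * (b * ξ1 t - c * ξ3 t + G t) / b
        = ξ1 t * ξ3 t - (c / b) * (ξ3 t) ^ 2 + ξ3 t * G t / b := by
      field_simp
    have h3G3 : ξ3 t * G t / b ≤ L * ((ξ1 t) ^ 2 + (ξ3 t) ^ 2) / 2 := by
      rw [div_le_iff₀ hb]
      nlinarith [h3G2]
    rw [hsplit]
    have e1 := mul_le_mul_of_nonneg_right hl1 (sq_nonneg (ξ1 t))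
    have e2 := mul_le_mul_of_nonneg_right hl2 (sq_nonneg (ξ2 t))
    have e3 := mul_le_mul_of_nonneg_right hl3 (sq_nonneg (ξ3 t))
    simp only [hfdef]
    nlinarith [e1, e2, e3, h3G3]
  -- v is antitone on [0, ∞)
  have hvanti : AntitoneOn v (Set.Ici (0:ℝ)) := by
    apply antitoneOn_of_deriv_nonpos (convex_Ici 0)
    · exact fun t ht => (hvdiff t ht).continuousAt.continuousWithinAt
    · intro t ht
      rw [interior_Ici] at ht
      exact (hvdiff t ht.le).differentiableWithinAt
    · intro t ht
      rw [interior_Ici] at ht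
      rw [(hder t ht.le).deriv]
      have hposf : 0 ≤ lam * f t := mul_nonneg hlam.le (hf0 t)
      have hbb := hbnd t ht.le
      rw [neg_mul] at hbb
      linarith
  -- limit of v along atTop
  set w : ℝ → ℝ := fun t => v (max t 0) with hwdef
  clear_value w
  have hwanti : Antitone w := by
    intro s t hst
    simp only [hwdef]
    exact hvanti (le_max_right s 0) (le_max_right t 0) (max_le_max hst le_rfl)
  have hwbdd : BddBelow (Set.range w) := by
    refine ⟨0, ?_⟩
    rintro x ⟨t, rfl⟩
    rw [hwdef]
    exact hv0 _
  have hwlim : Tendsto w atTop (nhds (⨅ t, w t)) := tendsto_atTop_ciInf hwanti hwbdd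
  -- main step : f → 0
  have hfto : Tendsto f atTop (nhds 0) := by
    by_contra hcon
    rw [Metric.tendsto_atTop] at hcon
    push_neg at hcon
    obtain ⟨ε₀, hε₀, hfreq⟩ := hcon
    rw [Metric.uniformContinuousOn_iff] at huc
    obtain ⟨δ, hδ, hucδ⟩ := huc (ε₀ / 2) (half_pos hε₀)
    set κ := lam * (ε₀ / 2) * (δ / 2) with hκdef
    clear_value κ
    have hκ : 0 < κ := by
      rw [hκdef]
      exact mul_pos (mul_pos hlam (by linarith)) (by linarith)
    have hshift : Tendsto (fun t => w (t + δ / 2)) atTop (nhds (⨅ t, w t)) :=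
      hwlim.comp (tendsto_atTop_add_const_right atTop (δ / 2) tendsto_id)
    have hlim2 : Tendsto (fun t => w t - w (t + δ / 2)) atTop (nhds 0) := by
      have := hwlim.sub hshift
      simpa using this
    obtain ⟨N, hN⟩ := Metric.tendsto_atTop.mp hlim2 κ hκ
    obtain ⟨t, ht, hft⟩ := hfreq (max N 0)
    have ht0 : (0:ℝ) ≤ t := le_trans (le_max_right N 0) ht
    have htN : N ≤ t := le_trans (le_max_left N 0) ht
    have hftε : ε₀ ≤ f t := by
      rwa [Real.dist_0_eq_abs, abs_of_nonneg (hf0 t)] at hft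
    have hfs : ∀ s ∈ Set.Icc t (t + δ / 2), ε₀ / 2 ≤ f s := by
      intro s hs
      have hs0 : (0:ℝ) ≤ s := le_trans ht0 hs.1
      have hd : dist s t < δ := by
        rw [Real.dist_eq, abs_of_nonneg (by linarith [hs.1] : (0:ℝ) ≤ s - t)]
        linarith [hs.2]
      have hd2 := hucδ s hs0 t ht0 hd
      rw [Real.dist_eq] at hd2
      obtain ⟨hab1, -⟩ := abs_lt.mp hd2
      linarith
    -- decrease of v on [t, t + δ/2]
    have hganti : AntitoneOn (fun s => v s + lam * (ε₀ / 2) * s)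
        (Set.Icc t (t + δ / 2)) := by
      have hgd : ∀ s, 0 ≤ s → HasDerivAt (fun s => v s + lam * (ε₀ / 2) * s)
          ((ξ1 s * (-(ξ2 s) - ξ3 s - 3 * ε * ξ1 s) + ξ2 s * (ξ1 s + a * ξ2 s)
            + ξ3 s * (b * ξ1 s - c * ξ3 s + G s) / b) + lam * (ε₀ / 2)) s := by
        intro s hs
        have := (hder s hs).add ((hasDerivAt_id s).const_mul (lam * (ε₀ / 2)))
        simp only [mul_one] at this
        exact this
      apply antitoneOn_of_deriv_nonpos (convex_Icc _ _)
      · intro s hs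
        exact ((hgd s (le_trans ht0 hs.1)).differentiableAt).continuousAt.continuousWithinAt
      · intro s hs
        rw [interior_Icc] at hs
        exact ((hgd s (le_trans ht0 hs.1.le)).differentiableAt).differentiableWithinAt
      · intro s hs
        rw [interior_Icc] at hs
        have hs0 : (0:ℝ) ≤ s := le_trans ht0 hs.1.le
        rw [(hgd s hs0).deriv]
        have hb1 := hbnd s hs0
        have hf2 : ε₀ / 2 ≤ f s := hfs s ⟨hs.1.le, hs.2.le⟩
        have : lam * (ε₀ / 2) ≤ lam * f s := mul_le_mul_of_nonneg_left hf2 hlam.le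
        linarith
    have hmem1 : t ∈ Set.Icc t (t + δ / 2) := ⟨le_refl t, by linarith⟩
    have hmem2 : t + δ / 2 ∈ Set.Icc t (t + δ / 2) := ⟨by linarith, le_refl _⟩
    have hdec := hganti hmem1 hmem2 (by linarith)
    simp only at hdec
    have hA : lam * (ε₀ / 2) * (t + δ / 2)
        = lam * (ε₀ / 2) * t + lam * (ε₀ / 2) * (δ / 2) := by ring
    have hvdec : κ ≤ v t - v (t + δ / 2) := by
      rw [hκdef]; linarith [hdec, hA.ge, hA.le]
    have hwt : w t = v t := by simp only [hwdef, max_eq_left ht0]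
    have hwt2 : w (t + δ / 2) = v (t + δ / 2) := by
      simp only [hwdef, max_eq_left (by linarith : (0:ℝ) ≤ t + δ / 2)]
    have hlt := hN t htN
    rw [Real.dist_0_eq_abs, hwt, hwt2] at hlt
    have hle := le_abs_self (v t - v (t + δ / 2))
    linarith
  -- from f → 0 to componentwise convergence
  have hsq : ∀ g : ℝ → ℝ, (∀ t, (g t) ^ 2 ≤ f t) → Tendsto g atTop (nhds 0) := by
    intro g hg'
    have h2 : Tendsto (fun t => (g t) ^ 2) atTop (nhds 0) :=
      tendsto_of_tendsto_of_tendsto_of_le_of_le tendsto_const_nhds hfto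
        (fun t => sq_nonneg _) hg'
    have habs : Tendsto (fun t => |g t|) atTop (nhds 0) := by
      have hc : Tendsto (fun t => Real.sqrt ((g t) ^ 2)) atTop (nhds (Real.sqrt 0)) :=
        (Real.continuous_sqrt.tendsto 0).comp h2
      simpa [Real.sqrt_sq_eq_abs] using hc
    have hneg : Tendsto (fun t => -|g t|) atTop (nhds 0) := by
      simpa using habs.neg
    exact tendsto_of_tendsto_of_tendsto_of_le_of_le hneg habs
      (fun t => neg_abs_le _) (fun t => le_abs_self _)
  have hb1 : ∀ t, (ξ1 t) ^ 2 ≤ f t := fun t => by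
    have e2 := sq_nonneg (ξ2 t); have e3 := sq_nonneg (ξ3 t)
    simp only [hfdef]; linarith
  have hb2 : ∀ t, (ξ2 t) ^ 2 ≤ f t := fun t => by
    have e1 := sq_nonneg (ξ1 t); have e3 := sq_nonneg (ξ3 t)
    simp only [hfdef]; linarith
  have hb3 : ∀ t, (ξ3 t) ^ 2 ≤ f t := fun t => by
    have e1 := sq_nonneg (ξ1 t); have e2 := sq_nonneg (ξ2 t)
    simp only [hfdef]; linarith
  exact ⟨hsq ξ1 hb1, hsq ξ2 hb2, hsq ξ3 hb3⟩
end
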